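/- Let T > 0, β ≥ 0, K ≥ 0, and let α be a probability measure on [−T, 0]. Let f : [0,T] × [0,T] × ( [−T,0] → ℝ ) × ( [−T,0] → ℝ ) → ℝ satisfy the delayed Lipschitz condition: for all (t,s) ∈ [0,T]² and all y, y', z, z' : [−T,0] → ℝ, |f(t,s,y,z) − f(t,s,y',z')|² ≤ K ( ∫_{[−T,0]} |y(u) − y'(u)|² dα(u) + ∫_{[−T,0]} |z(u) − z'(u)|² dα(u) ). Assume ∫_{[0,T]×[0,T]} e^{βs} |f(t,s,0,0)|² ds dt < ∞, where 0 denotes the zero function on [−T,0]. Let Y : ℝ → ℝ be measurable with Y(t) = Y(0) for t < 0 and ∫_{−T}^{T} e^{βs} |Y(s)|² ds < ∞, and let Z : ℝ × ℝ → ℝ be measurable with Z(t,s) = 0 whenever t < 0 or s < 0 and ∫_{[0,T]×[0,T]} e^{βs} |Z(t,s)|² ds dt < ∞. Then ∫_{[0,T]×[0,T]} e^{βs} |f(t,s,Y_s,Z_{t,s})|² ds dt ≤ 2K e^{βT} ( T ∫_{−T}^{T} e^{βs} |Y(s)|² ds + ∫_{[0,T]×[0,T]} e^{βs} |Z(t,s)|²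 ds dt ) + 2 ∫_{[0,T]×[0,T]} e^{βs} |f(t,s,0,0)|² ds dt < ∞. -/

import Mathlib

/-!
By the Lipschitz condition and `(a + b)² ≤ 2a² + 2b²`, the integrand is at most
`2K (∫ |Y(s+u)|² dα + ∫ |Z(t+u, s+u)|² dα) + 2 |f(t,s,0,0)|²`. After exchanging the
`dα(u)`-integral with the `ds dt`-integrals it remains to bound, for each fixed delay
`u ∈ [-T, 0]`, the shifted weighted norms: `e^{βs} ≤ e^{βT} e^{β(s+u)}`, and translating by
`u` moves `[0, T]` into `[-T, T]`; for `Z` the part of the shifted square lying at negative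
times contributes nothing because `Z` vanishes there.
-/

open MeasureTheory Set
open scoped ENNReal

lemma ofReal_sq_le_of_ofReal_sq_sub_le {a b : ℝ} {c : ℝ≥0∞}
    (h : ENNReal.ofReal ((a - b) ^ 2) ≤ c) :
    ENNReal.ofReal (a ^ 2) ≤ 2 * c + 2 * ENNReal.ofReal (b ^ 2) := by
  have hsq : a ^ 2 ≤ 2 * (a - b) ^ 2 + 2 * b ^ 2 := by nlinarith [sq_nonneg (a - 2 * b)]
  calc ENNReal.ofReal (a ^ 2)
      ≤ ENNReal.ofReal (2 * (a - b) ^ 2 + 2 * b ^ 2) := ENNReal.ofReal_le_ofReal hsq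
    _ = 2 * ENNReal.ofReal ((a - b) ^ 2) + 2 * ENNReal.ofReal (b ^ 2) := by
      rw [ENNReal.ofReal_add (by positivity) (by positivity), ENNReal.ofReal_mul zero_le_two,
        ENNReal.ofReal_mul zero_le_two, ENNReal.ofReal_ofNat]
    _ ≤ 2 * c + 2 * ENNReal.ofReal (b ^ 2) := by gcongr

lemma lintegral_lintegral_add_left {α β : Type*} [MeasurableSpace α] [MeasurableSpace β]
    {μ : Measure α} {ν : Measure β} [SFinite ν] {F : α → β → ℝ≥0∞}
    (hF : Measurable fun p : α × β => F p.1 p.2) (G : α → β → ℝ≥0∞) :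
    ∫⁻ x, ∫⁻ y, F x y + G x y ∂ν ∂μ = ∫⁻ x, ∫⁻ y, F x y ∂ν ∂μ + ∫⁻ x, ∫⁻ y, G x y ∂ν ∂μ := by
  rw [← lintegral_add_left hF.lintegral_prod_right]
  exact lintegral_congr fun x => lintegral_add_left (hF.comp measurable_prodMk_left) _

lemma setLIntegral_setLIntegral_le_of_le_mul_add_mul {α β : Type*} [MeasurableSpace α]
    [MeasurableSpace β] {μ : Measure α} {ν : Measure β} [SFinite ν] {s : Set α} {t : Set β}
    (hs : MeasurableSet s) (ht : MeasurableSet t) {F D C : α → β → ℝ≥0∞}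
    (hD : Measurable fun p : α × β => D p.1 p.2) {a b : ℝ≥0∞} (ha : a ≠ ⊤) (hb : b ≠ ⊤)
    (hF : ∀ x ∈ s, ∀ y ∈ t, F x y ≤ a * D x y + b * C x y) :
    ∫⁻ x in s, ∫⁻ y in t, F x y ∂ν ∂μ
      ≤ a * ∫⁻ x in s, ∫⁻ y in t, D x y ∂ν ∂μ + b * ∫⁻ x in s, ∫⁻ y in t, C x y ∂ν ∂μ := by
  calc ∫⁻ x in s, ∫⁻ y in t, F x y ∂ν ∂μ
      ≤ ∫⁻ x in s, ∫⁻ y in t, a * D x y + b * C x y ∂ν ∂μ :=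
        setLIntegral_mono' hs fun x hx => setLIntegral_mono' ht (hF x hx)
    _ = _ := by
      rw [lintegral_lintegral_add_left (by fun_prop)]
      simp only [lintegral_const_mul' _ _ ha, lintegral_const_mul' _ _ hb]

lemma setLIntegral_Icc_comp_add_right (g : ℝ → ℝ≥0∞) (a b u : ℝ) :
    ∫⁻ s in Icc a b, g (s + u) = ∫⁻ s in Icc (a + u) (b + u), g s := by
  rw [(measurePreserving_add_right volume u).setLIntegral_comp_emb
    (measurableEmbedding_addRight u), image_add_const_Icc]

lemma setLIntegral_Icc_le_of_eq_zero_of_neg {g : ℝ → ℝ≥0∞} (hg : ∀ s < 0, g s = 0)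
    {a b c : ℝ} (hbc : b ≤ c) :
    ∫⁻ s in Icc a b, g s ≤ ∫⁻ s in Icc 0 c, g s := by
  have hneg : ∫⁻ s in Iio 0, g s = 0 := by
    rw [setLIntegral_congr_fun measurableSet_Iio hg, lintegral_zero]
  calc ∫⁻ s in Icc a b, g s
      ≤ ∫⁻ s in Iio 0 ∪ Icc 0 c, g s := lintegral_mono_set fun s hs => by
        rcases lt_or_ge s 0 with h | h
        · exact Or.inl h
        · exact Or.inr ⟨h, hs.2.trans hbc⟩
    _ ≤ ∫⁻ s in Icc 0 c, g s := by
      simpa [hneg] using lintegral_union_le (μ := volume) g (Iio 0) (Icc 0 c)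

lemma Measurable.lintegral_comp_add_right {g : ℝ → ℝ≥0∞} (hg : Measurable g) (α : Measure ℝ)
    [SFinite α] : Measurable fun s => ∫⁻ u, g (s + u) ∂α :=
  Measurable.lintegral_prod_right' (f := fun p : ℝ × ℝ => g (p.1 + p.2)) (by fun_prop)

lemma Measurable.lintegral_comp_add_right₂ {G : ℝ → ℝ → ℝ≥0∞}
    (hG : Measurable (Function.uncurry G)) (α : Measure ℝ) [SFinite α] :
    Measurable fun p : ℝ × ℝ => ∫⁻ u, G (p.1 + u) (p.2 + u) ∂α :=
  Measurable.lintegral_prod_right' (f := fun p : (ℝ × ℝ) × ℝ => G (p.1.1 + p.2) (p.1.2 + p.2))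
    (hG.comp ((measurable_fst.fst.add measurable_snd).prodMk
      (measurable_fst.snd.add measurable_snd)))

section Weighted

variable {T β : ℝ}

lemma ofReal_exp_mul_le_mul_ofReal_exp_mul_add (hβ : 0 ≤ β) {u : ℝ} (hu : -T ≤ u) (s : ℝ) :
    ENNReal.ofReal (Real.exp (β * s))
      ≤ ENNReal.ofReal (Real.exp (β * T)) * ENNReal.ofReal (Real.exp (β * (s + u))) := by
  rw [← ENNReal.ofReal_mul (Real.exp_nonneg _), ← Real.exp_add]
  exact ENNReal.ofReal_le_ofReal (Real.exp_le_exp.mpr (by nlinarith))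

lemma setLIntegral_exp_mul_comp_add_le (hβ : 0 ≤ β) {u : ℝ} (hu : -T ≤ u) (g : ℝ → ℝ≥0∞) :
    ∫⁻ s in Icc 0 T, ENNReal.ofReal (Real.exp (β * s)) * g (s + u)
      ≤ ENNReal.ofReal (Real.exp (β * T)) *
          ∫⁻ s in Icc u (T + u), ENNReal.ofReal (Real.exp (β * s)) * g s := by
  calc ∫⁻ s in Icc 0 T, ENNReal.ofReal (Real.exp (β * s)) * g (s + u)
      ≤ ∫⁻ s in Icc 0 T, ENNReal.ofReal (Real.exp (β * T)) *
          (ENNReal.ofReal (Real.exp (β * (s + u))) * g (s + u)) := lintegral_mono fun s => by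
        rw [← mul_assoc]
        gcongr
        exact ofReal_exp_mul_le_mul_ofReal_exp_mul_add hβ hu s
    _ = _ := by
      rw [lintegral_const_mul' _ _ ENNReal.ofReal_ne_top,
        setLIntegral_Icc_comp_add_right (fun s => ENNReal.ofReal (Real.exp (β * s)) * g s),
        zero_add]

end Weighted

section Delay

variable {T β : ℝ} {α : Measure ℝ} [IsProbabilityMeasure α]

lemma setLIntegral_exp_mul_lintegral_comp_add_le (hα : ∀ᵐ u ∂α, u ∈ Icc (-T) 0) (hβ : 0 ≤ β)
    {g : ℝ → ℝ≥0∞} (hg : Measurable g) :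
    ∫⁻ s in Icc 0 T, ENNReal.ofReal (Real.exp (β * s)) * ∫⁻ u, g (s + u) ∂α
      ≤ ENNReal.ofReal (Real.exp (β * T)) *
          ∫⁻ s in Icc (-T) T, ENNReal.ofReal (Real.exp (β * s)) * g s := by
  calc ∫⁻ s in Icc 0 T, ENNReal.ofReal (Real.exp (β * s)) * ∫⁻ u, g (s + u) ∂α
      = ∫⁻ u, (∫⁻ s in Icc 0 T, ENNReal.ofReal (Real.exp (β * s)) * g (s + u)) ∂α := by
        simp_rw [← lintegral_const_mul' _ _ ENNReal.ofReal_ne_top]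
        exact lintegral_lintegral_swap (by fun_prop)
    _ ≤ ∫⁻ _, (ENNReal.ofReal (Real.exp (β * T)) *
          ∫⁻ s in Icc (-T) T, ENNReal.ofReal (Real.exp (β * s)) * g s) ∂α := by
        refine lintegral_mono_ae (hα.mono fun u hu => ?_)
        refine (setLIntegral_exp_mul_comp_add_le hβ hu.1 g).trans ?_
        exact mul_le_mul_right
          (lintegral_mono_set (Icc_subset_Icc hu.1 (by linarith [hu.2]))) _
    _ = _ := by simp

lemma setLIntegral_setLIntegral_exp_mul_comp_add_le (hβ : 0 ≤ β) {u : ℝ} (hu : u ∈ Icc (-T) 0)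
    {G : ℝ → ℝ → ℝ≥0∞} (hG : ∀ t s, t < 0 ∨ s < 0 → G t s = 0) :
    ∫⁻ t in Icc 0 T, ∫⁻ s in Icc 0 T, ENNReal.ofReal (Real.exp (β * s)) * G (t + u) (s + u)
      ≤ ENNReal.ofReal (Real.exp (β * T)) *
          ∫⁻ t in Icc 0 T, ∫⁻ s in Icc 0 T, ENNReal.ofReal (Real.exp (β * s)) * G t s := by
  have hTu : T + u ≤ T := by linarith [hu.2]
  calc ∫⁻ t in Icc 0 T, ∫⁻ s in Icc 0 T, ENNReal.ofReal (Real.exp (β * s)) * G (t + u) (s + u)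
      ≤ ∫⁻ t in Icc 0 T, ENNReal.ofReal (Real.exp (β * T)) *
          ∫⁻ s in Icc 0 T, ENNReal.ofReal (Real.exp (β * s)) * G (t + u) s := by
        refine lintegral_mono fun t => (setLIntegral_exp_mul_comp_add_le hβ hu.1 _).trans ?_
        refine mul_le_mul_right (setLIntegral_Icc_le_of_eq_zero_of_neg (fun s hs => ?_) hTu) _
        simp [hG _ s (Or.inr hs)]
    _ ≤ ENNReal.ofReal (Real.exp (β * T)) *
          ∫⁻ t in Icc 0 T, ∫⁻ s in Icc 0 T, ENNReal.ofReal (Real.exp (β * s)) * G t s := by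
        rw [lintegral_const_mul' _ _ ENNReal.ofReal_ne_top, setLIntegral_Icc_comp_add_right
          (fun t => ∫⁻ s in Icc 0 T, ENNReal.ofReal (Real.exp (β * s)) * G t s)]
        refine mul_le_mul_right (setLIntegral_Icc_le_of_eq_zero_of_neg (fun t ht => ?_) hTu) _
        simp [hG t _ (Or.inl ht)]

lemma setLIntegral_setLIntegral_exp_mul_lintegral_comp_add_le
    (hα : ∀ᵐ u ∂α, u ∈ Icc (-T) 0) (hβ : 0 ≤ β) {G : ℝ → ℝ → ℝ≥0∞}
    (hGm : Measurable (Function.uncurry G)) (hG : ∀ t s, t < 0 ∨ s < 0 → G t s = 0) :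
    ∫⁻ t in Icc 0 T, ∫⁻ s in Icc 0 T,
        ENNReal.ofReal (Real.exp (β * s)) * ∫⁻ u, G (t + u) (s + u) ∂α
      ≤ ENNReal.ofReal (Real.exp (β * T)) *
          ∫⁻ t in Icc 0 T, ∫⁻ s in Icc 0 T, ENNReal.ofReal (Real.exp (β * s)) * G t s := by
  have hGm' : Measurable fun p : (ℝ × ℝ) × ℝ =>
      ENNReal.ofReal (Real.exp (β * p.2)) * G (p.1.1 + p.1.2) (p.2 + p.1.2) := by
    have : Measurable fun p : (ℝ × ℝ) × ℝ => G (p.1.1 + p.1.2) (p.2 + p.1.2) :=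
      hGm.comp ((measurable_fst.fst.add measurable_fst.snd).prodMk
        (measurable_snd.add measurable_fst.snd))
    fun_prop
  calc ∫⁻ t in Icc 0 T, ∫⁻ s in Icc 0 T,
        ENNReal.ofReal (Real.exp (β * s)) * ∫⁻ u, G (t + u) (s + u) ∂α
      = ∫⁻ u, (∫⁻ t in Icc 0 T, ∫⁻ s in Icc 0 T,
          ENNReal.ofReal (Real.exp (β * s)) * G (t + u) (s + u)) ∂α := by
        simp_rw [← lintegral_const_mul' _ _ ENNReal.ofReal_ne_top]
        calc _ = ∫⁻ t in Icc 0 T, ∫⁻ u, (∫⁻ s in Icc 0 T,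
                ENNReal.ofReal (Real.exp (β * s)) * G (t + u) (s + u)) ∂α :=
              lintegral_congr fun t =>
                lintegral_lintegral_swap
                  (hGm'.comp (f := fun p : ℝ × ℝ => ((t, p.2), p.1)) (by fun_prop)).aemeasurable
          _ = _ := lintegral_lintegral_swap hGm'.lintegral_prod_right'.aemeasurable
    _ ≤ ∫⁻ _, (ENNReal.ofReal (Real.exp (β * T)) *
          ∫⁻ t in Icc 0 T, ∫⁻ s in Icc 0 T, ENNReal.ofReal (Real.exp (β * s)) * G t s) ∂α :=
        lintegral_mono_ae
          (hα.mono fun _ hu => setLIntegral_setLIntegral_exp_mul_comp_add_le hβ hu hG)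
    _ = _ := by simp

lemma setLIntegral_setLIntegral_exp_mul_delay_le (hα : ∀ᵐ u ∂α, u ∈ Icc (-T) 0) (hβ : 0 ≤ β)
    {g : ℝ → ℝ≥0∞} (hg : Measurable g) {G : ℝ → ℝ → ℝ≥0∞}
    (hGm : Measurable (Function.uncurry G)) (hG : ∀ t s, t < 0 ∨ s < 0 → G t s = 0) :
    ∫⁻ t in Icc 0 T, ∫⁻ s in Icc 0 T, ENNReal.ofReal (Real.exp (β * s)) *
        (∫⁻ u, g (s + u) ∂α + ∫⁻ u, G (t + u) (s + u) ∂α)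
      ≤ ENNReal.ofReal (Real.exp (β * T)) *
          (ENNReal.ofReal T * (∫⁻ s in Icc (-T) T, ENNReal.ofReal (Real.exp (β * s)) * g s)
            + ∫⁻ t in Icc 0 T, ∫⁻ s in Icc 0 T, ENNReal.ofReal (Real.exp (β * s)) * G t s) := by
  have := hg.lintegral_comp_add_right α
  simp_rw [mul_add]
  rw [lintegral_lintegral_add_left (by fun_prop), setLIntegral_const, Real.volume_Icc, sub_zero]
  refine (add_le_add (mul_le_mul_left (setLIntegral_exp_mul_lintegral_comp_add_le hα hβ hg) _)
    (setLIntegral_setLIntegral_exp_mul_lintegral_comp_add_le hα hβ hGm hG)).trans_eq ?_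
  ring

end Delay

theorem stmt_2_general (T β K : ℝ) (hβ : 0 ≤ β)
    (α : Measure ℝ) [IsProbabilityMeasure α] (hα : α (Set.Icc (-T) 0)ᶜ = 0)
    (f : ℝ → ℝ → (ℝ → ℝ) → (ℝ → ℝ) → ℝ)
    (hf : ∀ t ∈ Set.Icc (0:ℝ) T, ∀ s ∈ Set.Icc (0:ℝ) T, ∀ y y' z z' : ℝ → ℝ,
      ENNReal.ofReal ((f t s y z - f t s y' z') ^ 2)
        ≤ ENNReal.ofReal K *
            ((∫⁻ u, ENNReal.ofReal ((y u - y' u) ^ 2) ∂α)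
              + ∫⁻ u, ENNReal.ofReal ((z u - z' u) ^ 2) ∂α))
    (hf0 : (∫⁻ t in Icc (0:ℝ) T, ∫⁻ s in Icc (0:ℝ) T,
        ENNReal.ofReal (Real.exp (β * s)) *
          ENNReal.ofReal ((f t s (fun _ => (0:ℝ)) (fun _ => (0:ℝ))) ^ 2)) < ⊤)
    (Y : ℝ → ℝ) (hY : Measurable Y)
    (hYint : (∫⁻ s in Icc (-T) T,
        ENNReal.ofReal (Real.exp (β * s)) * ENNReal.ofReal ((Y s) ^ 2)) < ⊤)
    (Z : ℝ → ℝ → ℝ) (hZ : Measurable (Function.uncurry Z))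
    (hZneg : ∀ t s : ℝ, t < 0 ∨ s < 0 → Z t s = 0)
    (hZint : (∫⁻ t in Icc (0:ℝ) T, ∫⁻ s in Icc (0:ℝ) T,
        ENNReal.ofReal (Real.exp (β * s)) * ENNReal.ofReal ((Z t s) ^ 2)) < ⊤) :
    (∫⁻ t in Icc (0:ℝ) T, ∫⁻ s in Icc (0:ℝ) T,
        ENNReal.ofReal (Real.exp (β * s)) *
          ENNReal.ofReal ((f t s (fun u => Y (s + u)) (fun u => Z (t + u) (s + u))) ^ 2))
      ≤ ENNReal.ofReal (2 * K) * ENNReal.ofReal (Real.exp (β * T)) *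
          (ENNReal.ofReal T *
              (∫⁻ s in Icc (-T) T,
                ENNReal.ofReal (Real.exp (β * s)) * ENNReal.ofReal ((Y s) ^ 2))
            + ∫⁻ t in Icc (0:ℝ) T, ∫⁻ s in Icc (0:ℝ) T,
                ENNReal.ofReal (Real.exp (β * s)) * ENNReal.ofReal ((Z t s) ^ 2))
        + 2 * ∫⁻ t in Icc (0:ℝ) T, ∫⁻ s in Icc (0:ℝ) T,
            ENNReal.ofReal (Real.exp (β * s)) *
              ENNReal.ofReal ((f t s (fun _ => (0:ℝ)) (fun _ => (0:ℝ))) ^ 2)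
    ∧ ENNReal.ofReal (2 * K) * ENNReal.ofReal (Real.exp (β * T)) *
          (ENNReal.ofReal T *
              (∫⁻ s in Icc (-T) T,
                ENNReal.ofReal (Real.exp (β * s)) * ENNReal.ofReal ((Y s) ^ 2))
            + ∫⁻ t in Icc (0:ℝ) T, ∫⁻ s in Icc (0:ℝ) T,
                ENNReal.ofReal (Real.exp (β * s)) * ENNReal.ofReal ((Z t s) ^ 2))
        + 2 * (∫⁻ t in Icc (0:ℝ) T, ∫⁻ s in Icc (0:ℝ) T,
            ENNReal.ofReal (Real.exp (β * s)) *
              ENNReal.ofReal ((f t s (fun _ => (0:ℝ)) (fun _ => (0:ℝ))) ^ 2)) < ⊤ := by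
  set w : ℝ → ℝ≥0∞ := fun s => ENNReal.ofReal (Real.exp (β * s))
  set f₀ : ℝ → ℝ → ℝ≥0∞ := fun t s => ENNReal.ofReal (f t s (fun _ => 0) (fun _ => 0) ^ 2)
  set D : ℝ → ℝ → ℝ≥0∞ := fun t s =>
    ∫⁻ u, ENNReal.ofReal (Y (s + u) ^ 2) ∂α + ∫⁻ u, ENNReal.ofReal (Z (t + u) (s + u) ^ 2) ∂α
  have hpointwise : ∀ t ∈ Icc (0:ℝ) T, ∀ s ∈ Icc (0:ℝ) T,
      w s * ENNReal.ofReal (f t s (fun u => Y (s + u)) (fun u => Z (t + u) (s + u)) ^ 2)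
        ≤ ENNReal.ofReal (2 * K) * (w s * D t s) + 2 * (w s * f₀ t s) := by
    intro t ht s hs
    have hlip := hf t ht s hs (fun u => Y (s + u)) (fun _ => 0) (fun u => Z (t + u) (s + u))
      (fun _ => 0)
    simp only [sub_zero] at hlip
    calc _ ≤ w s * (2 * (ENNReal.ofReal K * D t s) + 2 * f₀ t s) := by
          gcongr; exact ofReal_sq_le_of_ofReal_sq_sub_le hlip
      _ = _ := by rw [ENNReal.ofReal_mul zero_le_two, ENNReal.ofReal_ofNat]; ring
  have hYsq : Measurable fun s => ENNReal.ofReal (Y s ^ 2) := by fun_prop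
  have hZsq : Measurable (Function.uncurry fun t s => ENNReal.ofReal (Z t s ^ 2)) :=
    (hZ.pow_const 2).ennreal_ofReal
  have hwD : Measurable fun p : ℝ × ℝ => w p.2 * D p.1 p.2 := by
    have := hYsq.lintegral_comp_add_right α
    have := hZsq.lintegral_comp_add_right₂ α
    fun_prop
  have hbound := setLIntegral_setLIntegral_le_of_le_mul_add_mul (μ := volume) (ν := volume)
    measurableSet_Icc measurableSet_Icc hwD ENNReal.ofReal_ne_top ENNReal.ofNat_ne_top hpointwise
  have hdelay := setLIntegral_setLIntegral_exp_mul_delay_le (mem_ae_iff.2 hα) hβ hYsq hZsq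
    fun t s hts => by simp [hZneg t s hts]
  refine ⟨hbound.trans ?_, by finiteness⟩
  rw [mul_assoc (ENNReal.ofReal (2 * K))]
  exact add_le_add_left (mul_le_mul_right hdelay _) _

/-- The finiteness estimate for the generator along a candidate solution, from the proof of
Proposition 3.2: if `f` satisfies the delayed Lipschitz condition, `f(·,·,0,0)` is square
integrable with weight `e^{βs}`, and `(Y,Z)` lie in the weighted `L²` spaces, then the weighted
double integral of `|f(t,s,Y_s,Z_{t,s})|²` is bounded by
`2K e^{βT}(T‖Y‖² + ‖Z‖²) + 2‖f(·,·,0,0)‖²`, and in particular finite. -/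
theorem stmt_2 (T β K : ℝ) (hT : 0 < T) (hβ : 0 ≤ β) (hK : 0 ≤ K)
    (α : Measure ℝ) [IsProbabilityMeasure α] (hα : α (Set.Icc (-T) 0)ᶜ = 0)
    (f : ℝ → ℝ → (ℝ → ℝ) → (ℝ → ℝ) → ℝ)
    (hf : ∀ t ∈ Set.Icc (0:ℝ) T, ∀ s ∈ Set.Icc (0:ℝ) T, ∀ y y' z z' : ℝ → ℝ,
      ENNReal.ofReal ((f t s y z - f t s y' z') ^ 2)
        ≤ ENNReal.ofReal K *
            ((∫⁻ u, ENNReal.ofReal ((y u - y' u) ^ 2) ∂α)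
              + ∫⁻ u, ENNReal.ofReal ((z u - z' u) ^ 2) ∂α))
    (hf0 : (∫⁻ t in Icc (0:ℝ) T, ∫⁻ s in Icc (0:ℝ) T,
        ENNReal.ofReal (Real.exp (β * s)) *
          ENNReal.ofReal ((f t s (fun _ => (0:ℝ)) (fun _ => (0:ℝ))) ^ 2)) < ⊤)
    (Y : ℝ → ℝ) (hY : Measurable Y) (hYneg : ∀ t < (0 : ℝ), Y t = Y 0)
    (hYint : (∫⁻ s in Icc (-T) T,
        ENNReal.ofReal (Real.exp (β * s)) * ENNReal.ofReal ((Y s) ^ 2)) < ⊤)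
    (Z : ℝ → ℝ → ℝ) (hZ : Measurable (Function.uncurry Z))
    (hZneg : ∀ t s : ℝ, t < 0 ∨ s < 0 → Z t s = 0)
    (hZint : (∫⁻ t in Icc (0:ℝ) T, ∫⁻ s in Icc (0:ℝ) T,
        ENNReal.ofReal (Real.exp (β * s)) * ENNReal.ofReal ((Z t s) ^ 2)) < ⊤) :
    (∫⁻ t in Icc (0:ℝ) T, ∫⁻ s in Icc (0:ℝ) T,
        ENNReal.ofReal (Real.exp (β * s)) *
          ENNReal.ofReal ((f t s (fun u => Y (s + u)) (fun u => Z (t + u) (s + u))) ^ 2))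
      ≤ ENNReal.ofReal (2 * K) * ENNReal.ofReal (Real.exp (β * T)) *
          (ENNReal.ofReal T *
              (∫⁻ s in Icc (-T) T,
                ENNReal.ofReal (Real.exp (β * s)) * ENNReal.ofReal ((Y s) ^ 2))
            + ∫⁻ t in Icc (0:ℝ) T, ∫⁻ s in Icc (0:ℝ) T,
                ENNReal.ofReal (Real.exp (β * s)) * ENNReal.ofReal ((Z t s) ^ 2))
        + 2 * ∫⁻ t in Icc (0:ℝ) T, ∫⁻ s in Icc (0:ℝ) T,
            ENNReal.ofReal (Real.exp (β * s)) *
              ENNReal.ofReal ((f t s (fun _ => (0:ℝ)) (fun _ => (0:ℝ))) ^ 2)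
    ∧ ENNReal.ofReal (2 * K) * ENNReal.ofReal (Real.exp (β * T)) *
          (ENNReal.ofReal T *
              (∫⁻ s in Icc (-T) T,
                ENNReal.ofReal (Real.exp (β * s)) * ENNReal.ofReal ((Y s) ^ 2))
            + ∫⁻ t in Icc (0:ℝ) T, ∫⁻ s in Icc (0:ℝ) T,
                ENNReal.ofReal (Real.exp (β * s)) * ENNReal.ofReal ((Z t s) ^ 2))
        + 2 * (∫⁻ t in Icc (0:ℝ) T, ∫⁻ s in Icc (0:ℝ) T,
            ENNReal.ofReal (Real.exp (β * s)) *
              ENNReal.ofReal ((f t s (fun _ => (0:ℝ)) (fun _ => (0:ℝ))) ^ 2)) < ⊤ :=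
  stmt_2_general T β K hβ α hα f hf hf0 Y hY hYint Z hZ hZneg hZint
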